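/- Let Z = [τ₁, τ₂, τ₃] be a bicyclic bitrade in τ-representation. Then there is no bitrade in τ-representation X, point x, and direction j such that slide(X, x, j) = Z or slide(X, x, j) = Z⁻¹. That is, no bicyclic bitrade (nor the inverse of one) arises as the result of a slide expansion. -/

import Mathlib

/-- The set of points moved by a permutation. -/
def mov (σ : Equiv.Perm ℕ) : Set ℕ := {x | σ x ≠ x}

/-- The underlying set `Γ = mov(τ₁) ∪ mov(τ₂) ∪ mov(τ₃)` of a triple of permutations. -/
def Gam (τ : Fin 3 → Equiv.Perm ℕ) : Set ℕ := mov (τ 0) ∪ mov (τ 1) ∪ mov (τ 2)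

/-- A bitrade in τ-representation: a triple `[τ₁, τ₂, τ₃]` of permutations of the
finite set `Γ = mov(τ₁) ∪ mov(τ₂) ∪ mov(τ₃)` (all permutations composed left to
right) satisfying (T1) `τ₁τ₂τ₃ = 1`, (T2) any cycle of `τ_i` and any cycle of `τ_j`
(`i < j`) move at most one common point, and (T3) each `τ_i` is fixed-point-free
on `Γ`. -/
structure IsTauRep (τ : Fin 3 → Equiv.Perm ℕ) : Prop where
  fin : (Gam τ).Finite
  t1 : ∀ x, τ 2 (τ 1 (τ 0 x)) = x
  t2 : ∀ i j : Fin 3, i < j → ∀ x y : ℕ, x ≠ y →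
    ¬((τ i).SameCycle x y ∧ (τ j).SameCycle x y)
  t3 : ∀ i : Fin 3, ∀ x ∈ Gam τ, τ i x ≠ x

/-- The same-cycle setoid on the set of points moved by `σ`;
its classes are the (nontrivial) cycles of `σ`. -/
def cycSetoidOn (σ : Equiv.Perm ℕ) : Setoid (mov σ) :=
  ⟨fun a b => σ.SameCycle a.1 b.1,
    ⟨fun a => Equiv.Perm.SameCycle.refl σ a.1,
     fun h => h.symm, fun h h' => h.trans h'⟩⟩

/-- `zc σ` is the number of cycles of `σ`. -/
noncomputable def zc (σ : Equiv.Perm ℕ) : ℕ := Nat.card (Quotient (cycSetoidOn σ))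

/-- (T4): the group `⟨τ₁, τ₂, τ₃⟩` acts transitively on `Γ`. -/
def TransOn (τ : Fin 3 → Equiv.Perm ℕ) : Prop :=
  ∀ x ∈ Gam τ, ∀ y ∈ Gam τ,
    ∃ g ∈ Subgroup.closure ({τ 0, τ 1, τ 2} : Set (Equiv.Perm ℕ)), g x = y

/-- A spherical bitrade in τ-representation: (T4) holds and the genus defined by
Euler's formula `order = size + 2 - 2g` is zero. -/
def Spherical (τ : Fin 3 → Equiv.Perm ℕ) : Prop :=
  IsTauRep τ ∧ TransOn τ ∧
    zc (τ 0) + zc (τ 1) + zc (τ 2) = Nat.card (Gam τ) + 2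

/-- A bitrade in τ-representation is bicyclic if some `τ_j` has exactly two cycles. -/
def Bicyclic (τ : Fin 3 → Equiv.Perm ℕ) : Prop := ∃ j : Fin 3, zc (τ j) = 2

/-- The inverse `Z⁻¹ = [τ₁⁻¹, τ₂⁻¹, τ₂τ₁]` of a bitrade in τ-representation
(`τ₂τ₁`, composed left to right, is `τ 0 * τ 1` in Lean's convention). -/
def ZInv (τ : Fin 3 → Equiv.Perm ℕ) : Fin 3 → Equiv.Perm ℕ :=
  ![(τ 0)⁻¹, (τ 1)⁻¹, τ 0 * τ 1]

/-- `SlideRel τ x j u τ'` says that `τ'` is the result of the slide expansion of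
`τ` at the point `x ∈ Γ` in direction `j`, with new point `u ∉ Γ`.  Writing
`k = j+1`, `l = j+2`, `w = xτ_j`, `a = xτ_j⁻¹`, `b = wτ_j`, `z = xτ_k`,
`y = wτ_l⁻¹`, the preconditions are that the `τ_j`-cycle through `x` has length at
least 3 and that the `τ_k`-cycle through `x` and the `τ_l`-cycle through `w` have
no common point; the new permutations send `a ↦ u ↦ b`, `x ↦ w ↦ x` (direction `j`),
insert `u` after `x` (direction `k`) and insert `u` between `y` and `w`
(direction `l`), agreeing with the old ones elsewhere. -/
def SlideRel (τ : Fin 3 → Equiv.Perm ℕ) (x : ℕ) (j : Fin 3) (u : ℕ)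
    (τ' : Fin 3 → Equiv.Perm ℕ) : Prop :=
  x ∈ Gam τ ∧ u ∉ Gam τ ∧
  τ j x ≠ x ∧ τ j (τ j x) ≠ x ∧
  (∀ p : ℕ, (τ (j + 1)).SameCycle x p → (τ (j + 2)).SameCycle (τ j x) p → False) ∧
  (τ' j ((τ j)⁻¹ x) = u ∧ τ' j u = τ j (τ j x) ∧
    τ' j x = τ j x ∧ τ' j (τ j x) = x ∧
    ∀ p : ℕ, p ≠ (τ j)⁻¹ x → p ≠ u → p ≠ x → p ≠ τ j x → τ' j p = τ j p) ∧
  (τ' (j + 1) x = u ∧ τ' (j + 1) u = τ (j + 1) x ∧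
    ∀ p : ℕ, p ≠ x → p ≠ u → τ' (j + 1) p = τ (j + 1) p) ∧
  (τ' (j + 2) ((τ (j + 2))⁻¹ (τ j x)) = u ∧ τ' (j + 2) u = τ j x ∧
    ∀ p : ℕ, p ≠ (τ (j + 2))⁻¹ (τ j x) → p ≠ u → τ' (j + 2) p = τ (j + 2) p)

/-!
A slide leaves a rigid pattern in its result `W`: `W j` contains the 2-cycle `(x w)`,
`W k` runs `x ↦ u ↦ z` and `W l` runs `y ↦ u ↦ w`. If `W j` had exactly two cycles,
`u` and `z` would lie in the one not through `x`, a second common point of a `W j`- and a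
`W k`-cycle. If `W k` had exactly two cycles, they would be those through `x` and `w`
(distinct by (T2), as `x, w` share a `W j`-cycle), and `y` would share two points with a
`W l`-cycle; symmetrically `z` if `W l` had two cycles. The inverse bitrade consists of
inverses and a conjugate of an inverse, so it is again a bicyclic bitrade.
-/

open Equiv Equiv.Perm

theorem sameCycle_of_apply_eq {σ : Perm ℕ} {p q : ℕ} (h : σ p = q) : σ.SameCycle p q :=
  h ▸ SameCycle.rfl.apply_right

theorem eq_or_eq_of_sameCycle_of_apply_apply {σ : Perm ℕ} {x w p : ℕ} (hx : σ x = w)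
    (hw : σ w = x) (h : σ.SameCycle x p) : p = x ∨ p = w := by
  obtain ⟨n, rfl⟩ := h
  have hsq : (σ ^ (2 : ℤ)) x = x := by rw [zpow_two, mul_apply, hx, hw]
  rw [← Int.emod_add_mul_ediv n 2, zpow_add, zpow_mul, mul_apply,
    zpow_apply_eq_self_of_apply_eq_self hsq]
  rcases Int.emod_two_eq_zero_or_one n with h | h <;> simp [h, hx]

theorem mov_inv (σ : Perm ℕ) : mov σ⁻¹ = mov σ := by
  ext p
  exact not_congr (inv_eq_iff_eq.trans eq_comm)

theorem apply_mem_mov {σ : Perm ℕ} {p : ℕ} : σ p ∈ mov σ ↔ p ∈ mov σ :=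
  σ.injective.ne_iff

theorem mem_mov_conj {g σ : Perm ℕ} {p : ℕ} : p ∈ mov (g * σ * g⁻¹) ↔ g⁻¹ p ∈ mov σ := by
  simp [mov, ← eq_inv_iff_eq]

theorem zc_eq_of_conj {σ τ : Perm ℕ} (g : Perm ℕ) (hmov : ∀ p, p ∈ mov τ ↔ g p ∈ mov σ)
    (hsc : ∀ p q, τ.SameCycle p q ↔ σ.SameCycle (g p) (g q)) : zc τ = zc σ :=
  Nat.card_congr (Quotient.congr (g.subtypeEquiv hmov) fun p q => hsc p q)

theorem zc_inv (σ : Perm ℕ) : zc σ⁻¹ = zc σ :=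
  zc_eq_of_conj 1 (by simp [mov_inv]) (by simp)

theorem zc_conj (g σ : Perm ℕ) : zc (g * σ * g⁻¹) = zc σ :=
  zc_eq_of_conj g⁻¹ (fun _ => mem_mov_conj) (fun _ _ => sameCycle_conj)

theorem sameCycle_or_sameCycle_of_zc_eq_two {σ : Perm ℕ} (h : zc σ = 2) {a b c : ℕ}
    (ha : a ∈ mov σ) (hb : b ∈ mov σ) (hc : c ∈ mov σ) (hab : ¬σ.SameCycle a b) :
    σ.SameCycle a c ∨ σ.SameCycle b c := by
  let _ := cycSetoidOn σ
  obtain ⟨B, -, hB⟩ := (Nat.card_eq_two_iff' (⟦⟨a, ha⟩⟧ : Quotient (cycSetoidOn σ))).1 h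
  by_contra! hne
  have hbB := hB ⟦⟨b, hb⟩⟧ fun e => hab (Quotient.exact e).symm
  have hcB := hB ⟦⟨c, hc⟩⟧ fun e => hne.1 (Quotient.exact e).symm
  exact hne.2 (Quotient.exact (hbB.trans hcB.symm))

def CyclesMeetAtMostOnce (σ τ : Perm ℕ) : Prop :=
  ∀ ⦃p q : ℕ⦄, σ.SameCycle p q → τ.SameCycle p q → p = q

namespace CyclesMeetAtMostOnce

variable {σ τ : Perm ℕ}

theorem inv (h : CyclesMeetAtMostOnce σ τ) : CyclesMeetAtMostOnce σ⁻¹ τ⁻¹ :=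
  fun _ _ hσ hτ => h hσ.of_inv hτ.of_inv

theorem conj (h : CyclesMeetAtMostOnce σ τ) (g : Perm ℕ) :
    CyclesMeetAtMostOnce (g * σ * g⁻¹) (g * τ * g⁻¹) :=
  fun _ _ hσ hτ => g⁻¹.injective (h (sameCycle_conj.1 hσ) (sameCycle_conj.1 hτ))

theorem zc_ne_two_of_transposition (h : CyclesMeetAtMostOnce σ τ) {x w u z : ℕ}
    (hx : σ x = w) (hw : σ w = x) (hwx : w ≠ x) (hu : u ∈ mov σ) (hz : z ∈ mov σ)
    (hux : u ≠ x) (huw : u ≠ w) (hzx : z ≠ x) (hzw : z ≠ w) (huz : τ.SameCycle u z)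
    (hzu : z ≠ u) : zc σ ≠ 2 := by
  intro h2
  have hxmov : x ∈ mov σ := fun e => hwx (hx.symm.trans e)
  have off_xw : ∀ p, p ≠ x → p ≠ w → ¬σ.SameCycle x p := fun p hpx hpw hp =>
    (eq_or_eq_of_sameCycle_of_apply_apply hx hw hp).elim hpx hpw
  rcases sameCycle_or_sameCycle_of_zc_eq_two h2 hxmov hu hz (off_xw u hux huw) with hxz | huz'
  · exact off_xw z hzx hzw hxz
  · exact hzu (h huz' huz).symm

theorem zc_ne_two_of_crossing (h : CyclesMeetAtMostOnce σ τ) {x w x' w' c : ℕ}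
    (hx : x ∈ mov σ) (hw : w ∈ mov σ) (hc : c ∈ mov σ) (hxw : ¬σ.SameCycle x w)
    (hxx' : σ.SameCycle x x') (hww' : σ.SameCycle w w') (hcx' : τ.SameCycle c x')
    (hcw' : τ.SameCycle c w') (hcx'ne : c ≠ x') (hcw'ne : c ≠ w') : zc σ ≠ 2 := by
  intro h2
  rcases sameCycle_or_sameCycle_of_zc_eq_two h2 hx hw hc hxw with hxc | hwc
  · exact hcx'ne (h (hxc.symm.trans hxx') hcx')
  · exact hcw'ne (h (hwc.symm.trans hww') hcw')

end CyclesMeetAtMostOnce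

namespace IsTauRep

variable {τ : Fin 3 → Perm ℕ}

theorem cyclesMeetAtMostOnce (h : IsTauRep τ) {i j : Fin 3} (hij : i ≠ j) :
    CyclesMeetAtMostOnce (τ i) (τ j) := by
  intro p q hi hj
  by_contra hpq
  rcases hij.lt_or_gt with hlt | hlt
  · exact h.t2 i j hlt p q hpq ⟨hi, hj⟩
  · exact h.t2 j i hlt p q hpq ⟨hj, hi⟩

theorem mov_eq (h : IsTauRep τ) (i : Fin 3) : mov (τ i) = Gam τ := by
  refine Set.Subset.antisymm ?_ (h.t3 i)
  fin_cases i <;> intro p hp <;> simp_all [Gam]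

theorem apply_mem_gam (h : IsTauRep τ) (i : Fin 3) {p : ℕ} : τ i p ∈ Gam τ ↔ p ∈ Gam τ := by
  rw [← h.mov_eq i]
  exact apply_mem_mov

theorem inv_two (h : IsTauRep τ) : (τ 2)⁻¹ = τ 1 * τ 0 :=
  Equiv.ext fun p => inv_eq_iff_eq.2 (h.t1 p).symm

theorem zInv_two_eq_conj_zero (h : IsTauRep τ) : ZInv τ 2 = τ 0 * (τ 2)⁻¹ * (τ 0)⁻¹ := by
  rw [h.inv_two]
  change τ 0 * τ 1 = _
  group

theorem zInv_two_eq_conj_one (h : IsTauRep τ) : ZInv τ 2 = (τ 1)⁻¹ * (τ 2)⁻¹ * (τ 1)⁻¹⁻¹ := by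
  rw [h.inv_two]
  change τ 0 * τ 1 = _
  group

theorem zc_zInv (h : IsTauRep τ) (i : Fin 3) : zc (ZInv τ i) = zc (τ i) := by
  fin_cases i
  · exact zc_inv (τ 0)
  · exact zc_inv (τ 1)
  · exact h.zInv_two_eq_conj_zero ▸ (zc_conj _ _).trans (zc_inv _)

theorem bicyclic_zInv (h : IsTauRep τ) (hb : Bicyclic τ) : Bicyclic (ZInv τ) :=
  let ⟨i, hi⟩ := hb
  ⟨i, (h.zc_zInv i).trans hi⟩

theorem mov_zInv (h : IsTauRep τ) (i : Fin 3) : mov (ZInv τ i) = Gam τ := by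
  fin_cases i
  · exact (mov_inv _).trans (h.mov_eq 0)
  · exact (mov_inv _).trans (h.mov_eq 1)
  · ext p
    change p ∈ mov (ZInv τ 2) ↔ _
    rw [h.zInv_two_eq_conj_zero, mem_mov_conj, mov_inv, h.mov_eq 2, ← h.apply_mem_gam 0]
    simp

theorem zInv (h : IsTauRep τ) : IsTauRep (ZInv τ) := by
  have hgam : Gam (ZInv τ) = Gam τ := by simp [Gam, h.mov_zInv]
  have hmeet : ∀ i j : Fin 3, i < j → CyclesMeetAtMostOnce (ZInv τ i) (ZInv τ j) := by
    intro i j hij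
    fin_cases i <;> fin_cases j <;> simp at hij
    · exact (h.cyclesMeetAtMostOnce (by decide : (0 : Fin 3) ≠ 1)).inv
    · change CyclesMeetAtMostOnce (τ 0)⁻¹ (ZInv τ 2)
      rw [h.zInv_two_eq_conj_zero]
      convert (h.cyclesMeetAtMostOnce (by decide : (0 : Fin 3) ≠ 2)).inv.conj (τ 0) using 1
      group
    · change CyclesMeetAtMostOnce (τ 1)⁻¹ (ZInv τ 2)
      rw [h.zInv_two_eq_conj_one]
      convert (h.cyclesMeetAtMostOnce (by decide : (1 : Fin 3) ≠ 2)).inv.conj (τ 1)⁻¹ using 1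
      group
  refine ⟨hgam ▸ h.fin, fun p => by simp [ZInv], ?_, fun i => ?_⟩
  · exact fun i j hij p q hpq ⟨hi, hj⟩ => hpq (hmeet i j hij hi hj)
  · rw [hgam, ← h.mov_zInv i]
    exact fun _ hp => hp

end IsTauRep

theorem IsTauRep.not_bicyclic_of_slide_pattern {W : Fin 3 → Perm ℕ} (h : IsTauRep W)
    {j : Fin 3} {x w u z y : ℕ} (hjx : W j x = w) (hjw : W j w = x) (hkx : W (j + 1) x = u)
    (hku : W (j + 1) u = z) (hly : W (j + 2) y = u) (hlu : W (j + 2) u = w) (hwx : w ≠ x)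
    (hzx : z ≠ x) (hyw : y ≠ w) : ¬Bicyclic W := by
  obtain ⟨hjk, hjl, hkl⟩ : j ≠ j + 1 ∧ j ≠ j + 2 ∧ j + 1 ≠ j + 2 :=
    (by decide : ∀ j : Fin 3, j ≠ j + 1 ∧ j ≠ j + 2 ∧ j + 1 ≠ j + 2) j
  have hx : x ∈ Gam W := h.mov_eq j ▸ fun e => hwx (hjx.symm.trans e)
  have hw : w ∈ Gam W := hjx ▸ (h.apply_mem_gam j).2 hx
  have hu : u ∈ Gam W := hkx ▸ (h.apply_mem_gam _).2 hx
  have hz : z ∈ Gam W := hku ▸ (h.apply_mem_gam _).2 hu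
  have hy : y ∈ Gam W := (h.apply_mem_gam _).1 (hly ▸ hu)
  have hux : u ≠ x := hkx ▸ h.t3 _ x hx
  have hwu : w ≠ u := hlu ▸ h.t3 _ u hu
  have hzu : z ≠ u := hku ▸ h.t3 _ u hu
  have huy : u ≠ y := hly ▸ h.t3 _ y hy
  have sxw : (W j).SameCycle x w := sameCycle_of_apply_eq hjx
  have sxu : (W (j + 1)).SameCycle x u := sameCycle_of_apply_eq hkx
  have suz : (W (j + 1)).SameCycle u z := sameCycle_of_apply_eq hku
  have syu : (W (j + 2)).SameCycle y u := sameCycle_of_apply_eq hly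
  have suw : (W (j + 2)).SameCycle u w := sameCycle_of_apply_eq hlu
  have hzw : z ≠ w := fun e => hwx (h.cyclesMeetAtMostOnce hjk sxw (e ▸ sxu.trans suz)).symm
  have nxw_k : ¬(W (j + 1)).SameCycle x w := fun s => hwx (h.cyclesMeetAtMostOnce hjk sxw s).symm
  have nxw_l : ¬(W (j + 2)).SameCycle x w := fun s => hwx (h.cyclesMeetAtMostOnce hjl sxw s).symm
  rintro ⟨i, hi⟩
  rcases (by decide : ∀ i j : Fin 3, i = j ∨ i = j + 1 ∨ i = j + 2) i j with rfl | rfl | rfl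
  · exact (h.cyclesMeetAtMostOnce hjk).zc_ne_two_of_transposition hjx hjw hwx (h.t3 _ u hu)
      (h.t3 _ z hz) hux hwu.symm hzx hzw suz hzu hi
  · exact (h.cyclesMeetAtMostOnce hkl).zc_ne_two_of_crossing (h.t3 _ x hx) (h.t3 _ w hw)
      (h.t3 _ y hy) nxw_k sxu .rfl syu (syu.trans suw) huy.symm hyw hi
  · exact (h.cyclesMeetAtMostOnce hkl.symm).zc_ne_two_of_crossing (h.t3 _ x hx) (h.t3 _ w hw)
      (h.t3 _ z hz) nxw_l .rfl suw.symm (sxu.trans suz).symm suz.symm hzx hzu hi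

theorem SlideRel.not_bicyclic {X W : Fin 3 → Perm ℕ} {x u : ℕ} {j : Fin 3}
    (hs : SlideRel X x j u W) (hX : IsTauRep X) (hW : IsTauRep W) : ¬Bicyclic W := by
  obtain ⟨hx, -, hwx, -, -, ⟨-, -, hjx, hjw, -⟩, ⟨hkx, hku, -⟩, ⟨hly, hlu, -⟩⟩ := hs
  have hw : X j x ∈ Gam X := (hX.apply_mem_gam j).2 hx
  exact hW.not_bicyclic_of_slide_pattern hjx hjw hkx hku hly hlu hwx (hX.t3 _ x hx)
    fun e => hX.t3 (j + 2) _ hw (inv_eq_iff_eq.1 e).symm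

/-- Corollary. No bicyclic bitrade in τ-representation, nor the
inverse of one, arises as the result of a slide expansion: if `Z` is bicyclic then
there is no bitrade `X` in τ-representation, point `x`, direction `j` and new point
`u` with `slide(X, x, j) = Z` or `slide(X, x, j) = Z⁻¹`. -/
theorem bicyclic_has_no_slide_parent (Z : Fin 3 → Equiv.Perm ℕ)
    (h : IsTauRep Z) (hb : Bicyclic Z) :
    ¬∃ (X : Fin 3 → Equiv.Perm ℕ) (x : ℕ) (j : Fin 3) (u : ℕ),
      IsTauRep X ∧ (SlideRel X x j u Z ∨ SlideRel X x j u (ZInv Z)) := by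
  rintro ⟨X, x, j, u, hX, hs | hs⟩
  · exact hs.not_bicyclic hX h hb
  · exact hs.not_bicyclic hX h.zInv (h.bicyclic_zInv hb)
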